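/- Let Ω ⊆ EuclideanSpace ℝ (Fin n) be a bounded open set, let u : EuclideanSpace ℝ (Fin n) → ℝ be C¹, and let v : EuclideanSpace ℝ (Fin n) → ℝ be C¹ with compact support contained in Ω. Then the function t ↦ ∫_Ω exp(‖∇u(x) + t∇v(x)‖²/2) dx (Lebesgue integral) is differentiable at t = 0 with derivative ∫_Ω exp(‖∇u(x)‖²/2) ⟪∇u(x), ∇v(x)⟫ dx. (First variation of the exponential energy functional 𝔼(u) = ∫ exp(F*²(Du)/2) dμ.) -/

import Mathlib

/-!
Along the line `t ↦ ∇u + t • ∇v` the integrand has `t`-derivative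
`exp (‖∇u + t • ∇v‖² / 2) * ⟪∇u + t • ∇v, ∇v⟫`. The gradients are continuous, hence bounded on the
compact closure of `Ω`, so for `|t| ≤ 1` this derivative is bounded by a constant, which is
integrable because `Ω` has finite measure; differentiation under the integral sign applies.
-/

open scoped RealInnerProductSpace
open Real MeasureTheory

noncomputable def Hess {n : ℕ} (f : EuclideanSpace ℝ (Fin n) → ℝ)
    (x v w : EuclideanSpace ℝ (Fin n)) : ℝ :=
  iteratedFDeriv ℝ 2 f x ![v, w]

noncomputable def lap {n : ℕ} (f : EuclideanSpace ℝ (Fin n) → ℝ)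
    (x : EuclideanSpace ℝ (Fin n)) : ℝ :=
  ∑ i, Hess f x (EuclideanSpace.basisFun (Fin n) ℝ i) (EuclideanSpace.basisFun (Fin n) ℝ i)

noncomputable def divg {n : ℕ} (X : EuclideanSpace ℝ (Fin n) → EuclideanSpace ℝ (Fin n))
    (x : EuclideanSpace ℝ (Fin n)) : ℝ :=
  ∑ i, ⟪fderiv ℝ X x (EuclideanSpace.basisFun (Fin n) ℝ i), EuclideanSpace.basisFun (Fin n) ℝ i⟫

open InnerProductSpace in
theorem ContDiff.continuous_gradient {𝕜 F : Type*} [RCLike 𝕜] [NormedAddCommGroup F]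
    [InnerProductSpace 𝕜 F] [CompleteSpace F] {f : F → 𝕜} (hf : ContDiff 𝕜 1 f) :
    Continuous (gradient f) :=
  (toDual 𝕜 F).symm.continuous.comp (hf.continuous_fderiv one_ne_zero)

theorem Continuous.exists_ae_restrict_norm_le {E F : Type*} [NormedAddCommGroup E]
    [ProperSpace E] [MeasurableSpace E] [OpensMeasurableSpace E] [NormedAddCommGroup F]
    {μ : Measure E} {s : Set E} (hs : Bornology.IsBounded s) {f : E → F} (hf : Continuous f) :
    ∃ M, ∀ᵐ x ∂μ.restrict s, ‖f x‖ ≤ M := by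
  obtain ⟨M, hM⟩ := hs.isCompact_closure.exists_bound_of_continuousOn hf.continuousOn
  exact ⟨M, ae_restrict_of_ae_restrict_of_subset subset_closure
    (ae_restrict_of_forall_mem isClosed_closure.measurableSet hM)⟩

section ExponentialEnergy

variable {E : Type*} [NormedAddCommGroup E] [InnerProductSpace ℝ E]

theorem hasDerivAt_exp_norm_add_smul_sq_half (a b : E) (t : ℝ) :
    HasDerivAt (fun s : ℝ => exp (‖a + s • b‖ ^ 2 / 2))
      (exp (‖a + t • b‖ ^ 2 / 2) * ⟪a + t • b, b⟫) t := by
  have hline : HasDerivAt (fun s : ℝ => a + s • b) b t := by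
    simpa using ((hasDerivAt_id t).smul_const b).const_add a
  convert (hline.norm_sq.div_const 2).exp using 1
  ring

theorem norm_add_smul_le_of_abs_le {a b : E} {t M K T : ℝ} (ha : ‖a‖ ≤ M) (hb : ‖b‖ ≤ K)
    (ht : |t| ≤ T) : ‖a + t • b‖ ≤ M + T * K :=
  calc ‖a + t • b‖ ≤ ‖a‖ + |t| * ‖b‖ := by simpa [norm_smul] using norm_add_le a (t • b)
    _ ≤ M + T * K := by gcongr; exact (abs_nonneg t).trans ht

variable {X : Type*} [MeasurableSpace X] {μ : Measure X} [IsFiniteMeasure μ]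

theorem hasDerivAt_integral_exp_norm_add_smul_sq_half {a b : X → E}
    (ha : AEStronglyMeasurable a μ) (hb : AEStronglyMeasurable b μ) {M K : ℝ}
    (haM : ∀ᵐ x ∂μ, ‖a x‖ ≤ M) (hbK : ∀ᵐ x ∂μ, ‖b x‖ ≤ K) (t₀ : ℝ) :
    HasDerivAt (fun t : ℝ => ∫ x, exp (‖a x + t • b x‖ ^ 2 / 2) ∂μ)
      (∫ x, exp (‖a x + t₀ • b x‖ ^ 2 / 2) * ⟪a x + t₀ • b x, b x⟫ ∂μ) t₀ := by
  set R := M + (|t₀| + 1) * K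
  have hline_meas : ∀ t : ℝ, AEStronglyMeasurable (fun x => a x + t • b x) μ :=
    fun t => ha.add (hb.const_smul t)
  have hF_meas : ∀ t : ℝ, AEStronglyMeasurable (fun x => exp (‖a x + t • b x‖ ^ 2 / 2)) μ :=
    fun t => (by fun_prop : Continuous fun c : E => exp (‖c‖ ^ 2 / 2)).comp_aestronglyMeasurable
      (hline_meas t)
  have hline_bound : ∀ᵐ x ∂μ, ∀ t ∈ Metric.ball t₀ 1, ‖a x + t • b x‖ ≤ R := by
    filter_upwards [haM, hbK] with x hax hbx t ht
    refine norm_add_smul_le_of_abs_le hax hbx ?_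
    have := abs_sub_abs_le_abs_sub t t₀
    rw [Metric.mem_ball, Real.dist_eq] at ht
    linarith
  have hF_int : Integrable (fun x => exp (‖a x + t₀ • b x‖ ^ 2 / 2)) μ := by
    refine .of_bound (hF_meas t₀) (exp (R ^ 2 / 2)) ?_
    filter_upwards [hline_bound] with x hx
    rw [Real.norm_eq_abs, abs_exp]
    gcongr
    exact hx t₀ (Metric.mem_ball_self one_pos)
  have hF'_bound : ∀ᵐ x ∂μ, ∀ t ∈ Metric.ball t₀ 1,
      ‖exp (‖a x + t • b x‖ ^ 2 / 2) * ⟪a x + t • b x, b x⟫‖ ≤ exp (R ^ 2 / 2) * (R * K) := by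
    filter_upwards [hline_bound, hbK] with x hx hbx t ht
    have hc := hx t ht
    rw [norm_mul, Real.norm_eq_abs, abs_exp, Real.norm_eq_abs]
    gcongr
    exact (abs_real_inner_le_norm _ _).trans
        (mul_le_mul hc hbx (norm_nonneg _) ((norm_nonneg _).trans hc))
  exact (hasDerivAt_integral_of_dominated_loc_of_deriv_le (Metric.ball_mem_nhds t₀ one_pos)
    (.of_forall hF_meas) hF_int ((hF_meas t₀).mul ((hline_meas t₀).inner hb)) hF'_bound
    (integrable_const _) (.of_forall fun x t _ =>
      hasDerivAt_exp_norm_add_smul_sq_half (a x) (b x) t)).2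

end ExponentialEnergy

theorem stmt_2_general {n : ℕ} (Ω : Set (EuclideanSpace ℝ (Fin n)))
    (hΩb : Bornology.IsBounded Ω)
    (u v : EuclideanSpace ℝ (Fin n) → ℝ)
    (hu : ContDiff ℝ 1 u) (hv : ContDiff ℝ 1 v) :
    HasDerivAt
      (fun t : ℝ => ∫ x in Ω, Real.exp (‖gradient u x + t • gradient v x‖ ^ 2 / 2))
      (∫ x in Ω, Real.exp (‖gradient u x‖ ^ 2 / 2) * ⟪gradient u x, gradient v x⟫)
      0 := by
  have : IsFiniteMeasure (volume.restrict Ω) := isFiniteMeasure_restrict.mpr hΩb.measure_lt_top.ne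
  have hgu := hu.continuous_gradient
  have hgv := hv.continuous_gradient
  obtain ⟨M, hM⟩ := hgu.exists_ae_restrict_norm_le (μ := volume) hΩb
  obtain ⟨K, hK⟩ := hgv.exists_ae_restrict_norm_le (μ := volume) hΩb
  simpa using hasDerivAt_integral_exp_norm_add_smul_sq_half hgu.aestronglyMeasurable
    hgv.aestronglyMeasurable hM hK 0

/-- First variation of the exponential energy functional on a bounded open set. -/
theorem stmt_2 {n : ℕ} (Ω : Set (EuclideanSpace ℝ (Fin n)))
    (hΩo : IsOpen Ω) (hΩb : Bornology.IsBounded Ω)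
    (u v : EuclideanSpace ℝ (Fin n) → ℝ)
    (hu : ContDiff ℝ 1 u) (hv : ContDiff ℝ 1 v)
    (hvsupp : HasCompactSupport v) (hsupp : tsupport v ⊆ Ω) :
    HasDerivAt
      (fun t : ℝ => ∫ x in Ω, Real.exp (‖gradient u x + t • gradient v x‖ ^ 2 / 2))
      (∫ x in Ω, Real.exp (‖gradient u x‖ ^ 2 / 2) * ⟪gradient u x, gradient v x⟫)
      0 :=
  stmt_2_general Ω hΩb u v hu hv
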